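/- arXiv:1111.2131 — 4 statements merged into one kernel-verified Lean document; each statement's English description precedes it below -/
import Mathlib

section
/- Let $k$ be a field of odd prime characteristic $p$, $d = (p+1)/2$, and $R = k[x,y,z]/(x^d + y^d - z^d)$. The triple $(-z^{d-1} x, y z^{d-1}, x^d - y^d)$ is a syzygy of $(x^p, y^p, z^p)$ in $R$: $-x^p z^{d-1} x + y^p y z^{d-1} + z^p(x^d - y^d) = 0$. -/
open MvPolynomial

noncomputable def fermatIdeal2 (k : Type*) [Field k] (d : ℕ) :
    Ideal (MvPolynomial (Fin 3) k) :=
  Ideal.span {X 0 ^ d + X 1 ^ d - X 2 ^ d}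

/-- `(-z^{d-1}x, yz^{d-1}, x^d - y^d)` is a syzygy of `(x^p, y^p, z^p)` in
`R = k[x,y,z]/(x^d + y^d - z^d)`, `char k = p = 2d - 1`. -/
theorem stmt2 (k : Type*) [Field k] (p d : ℕ) (hp : p.Prime) (h3 : 3 ≤ p) [CharP k p]
    (hd : p = 2 * d - 1) :
    Ideal.Quotient.mk (fermatIdeal2 k d)
      (-(X 0 ^ p * (X 2 ^ (d - 1) * X 0)) + X 1 ^ p * (X 1 * X 2 ^ (d - 1)) +
        X 2 ^ p * (X 0 ^ d - X 1 ^ d)) = 0 := by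
  have hd2 : 2 ≤ d := by omega
  obtain ⟨e, rfl⟩ : ∃ e, d = e + 1 := ⟨d - 1, by omega⟩
  have hpe : p = 2 * e + 1 := by omega
  rw [Ideal.Quotient.eq_zero_iff_mem, fermatIdeal2, Ideal.mem_span_singleton]
  refine ⟨-(X 2 ^ e * (X 0 ^ (e + 1) - X 1 ^ (e + 1))), ?_⟩
  subst hpe
  simp only [Nat.add_sub_cancel]
  ring
end

section
/- Let $k$ be an algebraically closed field of characteristic $p \geq 3$. In the quotient ring $T = k[a,b,c,d]/(2c - a^p,\ 2d - b^p,\ a - c^p,\ b - d^p,\ (ad - bc)^{p-1} + 2)$, the images of $c$ and $d$ are units. -/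
open MvPolynomial

noncomputable def fiberIdeal11 (k : Type*) [Field k] (p : ℕ) :
    Ideal (MvPolynomial (Fin 4) k) :=
  Ideal.span {2 * X 2 - X 0 ^ p, 2 * X 3 - X 1 ^ p, X 0 - X 2 ^ p, X 1 - X 3 ^ p,
    (X 0 * X 3 - X 1 * X 2) ^ (p - 1) + 2}

/-!
Once `a = cᵖ` and `b = dᵖ`, the determinant factors as `ad - bc = c d (cᵖ⁻¹ - dᵖ⁻¹)`, and it is
a unit because its `(p-1)`-st power is `-2`, which is invertible as `p` is odd. A factor of a
unit is a unit.
-/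

theorem isUnit_of_isUnit_pow_mul_sub_mul {R : Type*} [CommRing R] {a b c d : R} {n p : ℕ}
    (hn : n ≠ 0) (hp : p ≠ 0) (ha : a = c ^ p) (hb : b = d ^ p)
    (hu : IsUnit ((a * d - b * c) ^ n)) : IsUnit c ∧ IsUnit d := by
  obtain ⟨m, rfl⟩ := Nat.exists_eq_add_one_of_ne_zero hp
  have hdet : IsUnit (a * d - b * c) := (isUnit_pow_iff hn).1 hu
  refine ⟨isUnit_of_mul_isUnit_left (y := d * (c ^ m - d ^ m)) ?_,
    isUnit_of_mul_isUnit_left (y := c * (c ^ m - d ^ m)) ?_⟩ <;>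
  · convert hdet using 1
    rw [ha, hb]
    ring

theorem neg_two_ne_zero_of_charP_ne_two {R : Type*} [Ring R] [Nontrivial R] {p : ℕ} [CharP R p]
    (hp : p ≠ 2) : (-2 : R) ≠ 0 :=
  neg_ne_zero.2 <| Ring.two_ne_zero <| by rwa [ringChar.eq R p]

theorem stmt11_general (k : Type*) [Field k] (p : ℕ) (h3 : 3 ≤ p)
    [CharP k p] :
    IsUnit (Ideal.Quotient.mk (fiberIdeal11 k p) (X 2)) ∧
      IsUnit (Ideal.Quotient.mk (fiberIdeal11 k p) (X 3)) := by
  set f := Ideal.Quotient.mk (fiberIdeal11 k p)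
  have hrel : ∀ g ∈ ({2 * X 2 - X 0 ^ p, 2 * X 3 - X 1 ^ p, X 0 - X 2 ^ p, X 1 - X 3 ^ p,
      (X 0 * X 3 - X 1 * X 2) ^ (p - 1) + 2} : Set (MvPolynomial (Fin 4) k)), f g = 0 :=
    fun g hg => Ideal.Quotient.eq_zero_iff_mem.2 (Ideal.subset_span hg)
  have ha : f (X 0) = f (X 2) ^ p := by
    have := hrel (X 0 - X 2 ^ p) (by simp)
    rwa [map_sub, map_pow, sub_eq_zero] at this
  have hb : f (X 1) = f (X 3) ^ p := by
    have := hrel (X 1 - X 3 ^ p) (by simp)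
    rwa [map_sub, map_pow, sub_eq_zero] at this
  have hdet : (f (X 0) * f (X 3) - f (X 1) * f (X 2)) ^ (p - 1) = -2 := by
    have := hrel ((X 0 * X 3 - X 1 * X 2) ^ (p - 1) + 2) (by simp)
    rwa [map_add, map_pow, map_sub, map_mul, map_mul, map_ofNat, add_eq_zero_iff_eq_neg] at this
  refine isUnit_of_isUnit_pow_mul_sub_mul (n := p - 1) (by omega) (by omega) ha hb ?_
  rw [hdet]
  have := (isUnit_iff_ne_zero.2 (neg_two_ne_zero_of_charP_ne_two (by omega))).map
    (algebraMap k (MvPolynomial (Fin 4) k ⧸ fiberIdeal11 k p))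
  rwa [map_neg, map_ofNat] at this

/-- In `T = k[a,b,c,d]/(2c - aᵖ, 2d - bᵖ, a - cᵖ, b - dᵖ, (ad-bc)^{p-1} + 2)`,
the images of `c` and `d` are units. -/
theorem stmt11 (k : Type*) [Field k] [IsAlgClosed k] (p : ℕ) (hp : p.Prime) (h3 : 3 ≤ p)
    [CharP k p] :
    IsUnit (Ideal.Quotient.mk (fiberIdeal11 k p) (X 2)) ∧
      IsUnit (Ideal.Quotient.mk (fiberIdeal11 k p) (X 3)) :=
  stmt11_general k p h3
end

section
/- Let $k$ be an algebraically closed field of characteristic $p \geq 3$ and let $\zeta \in k$ satisfy $\zeta^{p^2-1} = 1$ but $\zeta^{p-1} \neq 1$, and let $c \in k$ satisfy $c^{p^2-1} = 2$. Set $d = \zeta c$. Then $(c d^p - c^p d)^{p-1} = -2$. -/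
/-- If `ζ^{p²-1} = 1`, `ζ^{p-1} ≠ 1`, `c^{p²-1} = 2` and `d = ζc`, then
`(cdᵖ - cᵖd)^{p-1} = -2`. -/
theorem stmt12 (k : Type*) [Field k] [IsAlgClosed k] (p : ℕ) (hp : p.Prime) (h3 : 3 ≤ p)
    [CharP k p] (ζ c d : k) (hζ : ζ ^ (p ^ 2 - 1) = 1) (hζ' : ζ ^ (p - 1) ≠ 1)
    (hc : c ^ (p ^ 2 - 1) = 2) (hd : d = ζ * c) :
    (c * d ^ p - c ^ p * d) ^ (p - 1) = -2 := by
  haveI := Fact.mk hp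
  have hp1 : 1 ≤ p := hp.one_le
  have hfac : (p - 1) * (p + 1) = p ^ 2 - 1 := by
    have := Nat.sq_sub_sq p 1
    simp only [one_pow] at this
    rw [this, mul_comm]
  set w := ζ ^ (p - 1) with hw
  have hw1 : w ^ (p + 1) = 1 := by rw [hw, ← pow_mul, hfac, hζ]
  have hw0 : w ≠ 0 := by
    intro h; rw [h, zero_pow (by omega)] at hw1; exact zero_ne_one hw1
  have hwp : w ^ p = w⁻¹ := by
    have h : w ^ p * w = 1 := by rw [← pow_succ, hw1]
    exact eq_inv_of_mul_eq_one_left h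
  have hsub : w - 1 ≠ 0 := sub_ne_zero.mpr hζ'
  have hfrob : (w - 1) ^ p = w ^ p - 1 := by
    simpa using sub_pow_char w 1
  have hkey : w * (w - 1) ^ (p - 1) = -1 := by
    have h1 : (w - 1) ^ (p - 1) * (w - 1) = w⁻¹ - 1 := by
      rw [← pow_succ, Nat.sub_add_cancel hp1, hfrob, hwp]
    have h2 : w * (w - 1) ^ (p - 1) * (w - 1) = -1 * (w - 1) := by
      rw [mul_assoc, h1, mul_sub, mul_inv_cancel₀ hw0]; ring
    exact mul_right_cancel₀ hsub h2
  have hz : ζ ^ p = ζ * w := by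
    rw [hw, ← pow_succ', Nat.sub_add_cancel hp1]
  have hc1 : c * d ^ p - c ^ p * d = c ^ (p + 1) * (ζ * (w - 1)) := by
    rw [hd, mul_pow, hz, pow_succ]; ring
  rw [hc1, mul_pow, mul_pow, ← pow_mul, ← hw,
    show (p + 1) * (p - 1) = p ^ 2 - 1 by rw [mul_comm]; exact hfac, hc]
  calc 2 * (w * (w - 1) ^ (p - 1)) = 2 * (w * (w - 1) ^ (p - 1)) := rfl
    _ = 2 * (-1) := by rw [hkey]
    _ = -2 := by ring
end

section
/- Let $k$ be an algebraically closed field of characteristic $p \geq 3$. The number of pairs $(c,d) \in k^2$ satisfying $c^{p^2-1} = 2$, $d^{p^2-1} = 2$, and $(cd^p - c^p d)^{p-1} = -2$ is exactly $(p^2-1)\cdot p \cdot (p-1)$. -/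
/-!
Write `n = p² - 1`. Since `c ≠ 0`, every solution is `(c, zc)` with `c^n = 2` and `z^n = 1`,
and then `cdᵖ - cᵖd = c^(p+1) (zᵖ - z)` with `(c^(p+1))^(p-1) = c^n = 2`. For `u = z^(p-1)`, a
`(p+1)`-th root of unity, the Frobenius identity `(u - 1)ᵖ = uᵖ - 1 = u⁻¹ - 1` gives
`(zᵖ - z)^(p-1) = u (u - 1)^(p-1) = -1` as soon as `u ≠ 1`, while `u = 1` makes `zᵖ - z = 0`.
So the solutions correspond to the `n` choices of `c` times the `n - (p - 1) = p(p - 1)`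
elements `z` of `μₙ ∖ μ_{p-1}`; all these counts are exact because `n ≡ -1` is a unit in `k`.
-/

open Polynomial

theorem Nat.sq_sub_one_eq_mul (n : ℕ) : n ^ 2 - 1 = (n + 1) * (n - 1) := by
  simpa using Nat.sq_sub_sq n 1

section RootCount

variable {k : Type*} [Field k] [IsAlgClosed k]

theorem IsAlgClosed.ncard_pow_eq {n : ℕ} (hn : (n : k) ≠ 0) {a : k} (ha : a ≠ 0) :
    {x : k | x ^ n = a}.ncard = n := by
  classical
  have : NeZero (n : k) := ⟨hn⟩
  have hn0 : 0 < n := Nat.pos_of_ne_zero (NeZero.of_neZero_natCast k).out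
  obtain ⟨ζ, hζ⟩ := HasEnoughRootsOfUnity.exists_primitiveRoot k n
  have hroots : {x : k | x ^ n = a} = ↑(nthRoots n a).toFinset := by
    ext x
    simp [mem_nthRoots hn0]
  rw [hroots, Set.ncard_coe_finset, Multiset.toFinset_card_of_nodup (hζ.nthRoots_nodup ha),
    hζ.card_nthRoots, if_pos (IsAlgClosed.exists_pow_nat_eq a hn0)]

theorem IsAlgClosed.ncard_pow_eq_one_and_pow_ne_one {m n : ℕ} (hmn : m ∣ n)
    (hn : (n : k) ≠ 0) :
    {z : k | z ^ n = 1 ∧ z ^ m ≠ 1}.ncard = n - m := by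
  have hm : (m : k) ≠ 0 := by
    obtain ⟨l, rfl⟩ := hmn
    push_cast at hn
    exact left_ne_zero_of_mul hn
  have hsub : {z : k | z ^ m = 1} ⊆ {z : k | z ^ n = 1} := by
    obtain ⟨l, rfl⟩ := hmn
    intro z (hz : z ^ m = 1)
    rw [Set.mem_ofPred_eq, pow_mul, hz, one_pow]
  have hcard := ncard_pow_eq hm one_ne_zero
  have hfin : {z : k | z ^ m = 1}.Finite := Set.finite_of_ncard_ne_zero (by
    rw [hcard]; rintro rfl; exact hm Nat.cast_zero)
  change ({z : k | z ^ n = 1} \ {z : k | z ^ m = 1}).ncard = n - m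
  rw [Set.ncard_sdiff hsub hfin, ncard_pow_eq hn one_ne_zero, hcard]

end RootCount

section CharP

variable {R : Type*} [CommRing R] [IsDomain R] {p : ℕ} [hp : Fact p.Prime] [CharP R p]

theorem mul_sub_one_pow_pred_eq_neg_one {u : R} (hu : u ^ (p + 1) = 1) (hu1 : u ≠ 1) :
    u * (u - 1) ^ (p - 1) = -1 := by
  apply mul_right_cancel₀ (sub_ne_zero.mpr hu1)
  calc u * (u - 1) ^ (p - 1) * (u - 1) = u * (u - 1) ^ p := by
        rw [mul_assoc, ← pow_succ, Nat.sub_add_cancel hp.out.one_le]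
    _ = u ^ (p + 1) - u := by rw [sub_pow_char, one_pow]; ring
    _ = -1 * (u - 1) := by rw [hu]; ring

theorem pow_char_sub_self_pow_pred_eq_neg_one_iff {z : R} (hz : z ^ (p ^ 2 - 1) = 1) :
    (z ^ p - z) ^ (p - 1) = -1 ↔ z ^ (p - 1) ≠ 1 := by
  have hzp : z ^ p = z * z ^ (p - 1) := by rw [← pow_succ', Nat.sub_add_cancel hp.out.one_le]
  constructor
  · intro h h1
    rw [hzp, h1, mul_one, sub_self, zero_pow (Nat.sub_ne_zero_of_lt hp.out.one_lt)] at h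
    exact one_ne_zero (neg_eq_zero.mp h.symm)
  · intro h1
    rw [hzp, ← mul_sub_one, mul_pow]
    refine mul_sub_one_pow_pred_eq_neg_one ?_ h1
    rw [← pow_mul, ← hz, Nat.sq_sub_one_eq_mul, mul_comm]

end CharP

section Field

variable {k : Type*} [Field k] {p : ℕ} [hp : Fact p.Prime] [CharP k p]

theorem setOf_pow_eq_and_cross_pow_eq_neg_eq_image {a : k} (ha : a ≠ 0) :
    {cd : k × k | cd.1 ^ (p ^ 2 - 1) = a ∧ cd.2 ^ (p ^ 2 - 1) = a ∧
      (cd.1 * cd.2 ^ p - cd.1 ^ p * cd.2) ^ (p - 1) = -a} =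
    (fun q : k × k => (q.1, q.2 * q.1)) ''
      ({c | c ^ (p ^ 2 - 1) = a} ×ˢ {z | z ^ (p ^ 2 - 1) = 1 ∧ z ^ (p - 1) ≠ 1}) := by
  have hcross (c z : k) : (c * (z * c) ^ p - c ^ p * (z * c)) ^ (p - 1) =
      c ^ (p ^ 2 - 1) * (z ^ p - z) ^ (p - 1) := by
    rw [Nat.sq_sub_one_eq_mul, pow_mul, ← mul_pow]
    ring
  have hn0 : p ^ 2 - 1 ≠ 0 := by
    rw [Nat.sq_sub_one_eq_mul]
    exact mul_ne_zero p.succ_ne_zero (Nat.sub_ne_zero_of_lt hp.out.one_lt)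
  ext ⟨c, d⟩
  simp only [Set.mem_ofPred_eq, Set.mem_image, Set.mem_prod, Prod.exists, Prod.mk.injEq]
  constructor
  · rintro ⟨hc, hd, hcd⟩
    have hc0 : c ≠ 0 := by
      rintro rfl
      exact ha (by rw [← hc, zero_pow hn0])
    have hz : (d / c) ^ (p ^ 2 - 1) = 1 := by rw [div_pow, hc, hd, div_self ha]
    refine ⟨c, d / c, ⟨hc, hz, ?_⟩, rfl, div_mul_cancel₀ d hc0⟩
    rw [← pow_char_sub_self_pow_pred_eq_neg_one_iff hz]
    rw [← div_mul_cancel₀ d hc0, hcross, hc] at hcd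
    exact mul_left_cancel₀ ha (hcd.trans (mul_neg_one a).symm)
  · rintro ⟨c, z, ⟨hc, hz, hzp⟩, rfl, rfl⟩
    refine ⟨hc, by rw [mul_pow, hz, one_mul, hc], ?_⟩
    rw [hcross, hc, (pow_char_sub_self_pow_pred_eq_neg_one_iff hz).mpr hzp, mul_neg_one]

end Field

theorem ncard_setOf_pow_eq_and_cross_pow_eq_neg (k : Type*) [Field k] [IsAlgClosed k] {p : ℕ}
    [hp : Fact p.Prime] [CharP k p] {a : k} (ha : a ≠ 0) :
    {cd : k × k | cd.1 ^ (p ^ 2 - 1) = a ∧ cd.2 ^ (p ^ 2 - 1) = a ∧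
      (cd.1 * cd.2 ^ p - cd.1 ^ p * cd.2) ^ (p - 1) = -a}.ncard = (p ^ 2 - 1) * p * (p - 1) := by
  have hp1 : 1 ≤ p := hp.out.one_le
  have hn : ((p ^ 2 - 1 : ℕ) : k) ≠ 0 := by
    rw [Nat.cast_sub (Nat.one_le_pow _ _ hp1), Nat.cast_pow, Nat.cast_one, CharP.cast_eq_zero,
      zero_pow two_ne_zero, zero_sub]
    exact neg_ne_zero.mpr one_ne_zero
  have hinj : Set.InjOn (fun q : k × k => (q.1, q.2 * q.1))
      ({c | c ^ (p ^ 2 - 1) = a} ×ˢ {z | z ^ (p ^ 2 - 1) = 1 ∧ z ^ (p - 1) ≠ 1}) := by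
    rintro ⟨c, z⟩ ⟨hc : c ^ (p ^ 2 - 1) = a, -⟩ ⟨c', z'⟩ - h
    simp only [Prod.mk.injEq] at h ⊢
    obtain ⟨rfl, h⟩ := h
    exact ⟨rfl, mul_right_cancel₀ (ne_zero_pow (fun h0 => by simp [h0] at hn) (hc ▸ ha)) h⟩
  rw [setOf_pow_eq_and_cross_pow_eq_neg_eq_image ha, hinj.ncard_image, Set.ncard_prod,
    IsAlgClosed.ncard_pow_eq hn ha,
    IsAlgClosed.ncard_pow_eq_one_and_pow_ne_one
      (Dvd.intro_left _ (Nat.sq_sub_one_eq_mul p).symm) hn,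
    Nat.sub_sub, Nat.add_sub_cancel' hp1, sq, ← Nat.mul_sub_one, mul_assoc]

theorem stmt14_general (k : Type*) [Field k] [IsAlgClosed k] (p : ℕ) (h3 : 3 ≤ p)
    [CharP k p] :
    Set.ncard {cd : k × k | cd.1 ^ (p ^ 2 - 1) = 2 ∧ cd.2 ^ (p ^ 2 - 1) = 2 ∧
      (cd.1 * cd.2 ^ p - cd.1 ^ p * cd.2) ^ (p - 1) = -2} = (p ^ 2 - 1) * p * (p - 1) := by
  have : NeZero p := ⟨by omega⟩
  have := CharP.char_is_prime_of_pos k p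
  have h2 : (2 : k) ≠ 0 := by
    have hndvd : ¬p ∣ 2 := fun h => by have := Nat.le_of_dvd two_pos h; omega
    exact_mod_cast (CharP.cast_eq_zero_iff k p 2).not.mpr hndvd
  exact ncard_setOf_pow_eq_and_cross_pow_eq_neg k h2

/-- Over an algebraically closed field of characteristic `p ≥ 3`, the number of pairs `(c,d)`
with `c^{p²-1} = 2`, `d^{p²-1} = 2` and `(cdᵖ - cᵖd)^{p-1} = -2` is `(p²-1)·p·(p-1)`. -/
theorem stmt14 (k : Type*) [Field k] [IsAlgClosed k] (p : ℕ) (hp : p.Prime) (h3 : 3 ≤ p)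
    [CharP k p] :
    Set.ncard {cd : k × k | cd.1 ^ (p ^ 2 - 1) = 2 ∧ cd.2 ^ (p ^ 2 - 1) = 2 ∧
      (cd.1 * cd.2 ^ p - cd.1 ^ p * cd.2) ^ (p - 1) = -2} = (p ^ 2 - 1) * p * (p - 1) :=
  stmt14_general k p h3
end
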